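/- With the setup of the pentagram map on a convex n-gon and the quantities Aᵢ, Bᵢ, Cᵢ, Dᵢ, the transformed quantity T(Bᵢ/Dᵢ), defined as the ratio [u_{i−1}−uᵢ, uᵢ−u_{i+1}]/[u_{i−1}−uᵢ, uᵢ−u_{i+2}] built from the image polygon U = T(V), equals B_{i+1}/D_{i+2}. -/

import Mathlib

noncomputable section

/-- The 2×2 determinant [u,v] = u₁v₂ − u₂v₁. -/
def det2 (u v : ℝ × ℝ) : ℝ := u.1 * v.2 - u.2 * v.1

/-- A_i = [v_{i-1}-v_{i+1}, v_{i+1}-v_{i+2}] / [v_{i-1}-v_{i+1}, v_i-v_{i+2}]. -/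
def Acoef (v : ℤ → ℝ × ℝ) (i : ℤ) : ℝ :=
  det2 (v (i-1) - v (i+1)) (v (i+1) - v (i+2)) / det2 (v (i-1) - v (i+1)) (v i - v (i+2))

/-- B_i = [v_{i-1}-v_i, v_i-v_{i+1}] / [v_{i-1}-v_{i+1}, v_i-v_{i+2}]. -/
def Bcoef (v : ℤ → ℝ × ℝ) (i : ℤ) : ℝ :=
  det2 (v (i-1) - v i) (v i - v (i+1)) / det2 (v (i-1) - v (i+1)) (v i - v (i+2))

/-- C_i = [v_i-v_{i+1}, v_{i+1}-v_{i+2}] / [v_{i-1}-v_{i+1}, v_i-v_{i+2}]. -/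
def Ccoef (v : ℤ → ℝ × ℝ) (i : ℤ) : ℝ :=
  det2 (v i - v (i+1)) (v (i+1) - v (i+2)) / det2 (v (i-1) - v (i+1)) (v i - v (i+2))

/-- D_i = [v_{i-1}-v_i, v_i-v_{i+2}] / [v_{i-1}-v_{i+1}, v_i-v_{i+2}]. -/
def Dcoef (v : ℤ → ℝ × ℝ) (i : ℤ) : ℝ :=
  det2 (v (i-1) - v i) (v i - v (i+2)) / det2 (v (i-1) - v (i+1)) (v i - v (i+2))

/-- The pentagram map: u_i = A_i v_i + B_i v_{i+2}, the intersection of the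
diagonals (v_{i-1} v_{i+1}) and (v_i v_{i+2}). -/
def pent (v : ℤ → ℝ × ℝ) (i : ℤ) : ℝ × ℝ :=
  Acoef v i • v i + Bcoef v i • v (i+2)

/-! Every vertex `u_j` of the image lies on both diagonals `v_{j-1} v_{j+1}` and `v_j v_{j+2}`.
Hence, with `a = v_{i-1} - v_{i+1}` and `b = v_{i+1} - v_{i+3}`, the side `u_{i-1} - u_i` is a
multiple of `a`, while splitting `u_i - u_{i+1}` and `u_i - u_{i+2}` at `v_{i+1}` gives
`C_i a + B_{i+1} b` and `C_i a + D_{i+2} b`. The `a`-components vanish in both determinants,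
which therefore differ only by the factors `B_{i+1}` and `D_{i+2}`. -/

lemma det2_smul_smul_add_smul (r s t : ℝ) (x y : ℝ × ℝ) :
    det2 (r • x) (s • x + t • y) = r * det2 x y * t := by
  simp only [det2, Prod.smul_fst, Prod.smul_snd, Prod.fst_add, Prod.snd_add, smul_eq_mul]
  ring

section

variable {v : ℤ → ℝ × ℝ} {j : ℤ}

lemma Acoef_add_Bcoef (h : det2 (v (j-1) - v (j+1)) (v j - v (j+2)) ≠ 0) :
    Acoef v j + Bcoef v j = 1 := by
  rw [Acoef, Bcoef, ← add_div, div_eq_one_iff_eq h]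
  simp only [det2, Prod.fst_sub, Prod.snd_sub]
  ring

lemma Ccoef_add_Dcoef (h : det2 (v (j-1) - v (j+1)) (v j - v (j+2)) ≠ 0) :
    Ccoef v j + Dcoef v j = 1 := by
  rw [Ccoef, Dcoef, ← add_div, div_eq_one_iff_eq h]
  simp only [det2, Prod.fst_sub, Prod.snd_sub]
  ring

lemma pent_eq_Ccoef_smul_add_Dcoef_smul (h : det2 (v (j-1) - v (j+1)) (v j - v (j+2)) ≠ 0) :
    pent v j = Ccoef v j • v (j-1) + Dcoef v j • v (j+1) := by
  simp only [pent, Acoef, Bcoef, Ccoef, Dcoef]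
  ext <;> simp only [Prod.fst_add, Prod.snd_add, Prod.smul_fst, Prod.smul_snd, smul_eq_mul] <;>
    field_simp <;> simp only [det2, Prod.fst_sub, Prod.snd_sub] <;> ring

lemma pent_sub_vertex_add_two (h : det2 (v (j-1) - v (j+1)) (v j - v (j+2)) ≠ 0) :
    pent v j - v (j+2) = Acoef v j • (v j - v (j+2)) := by
  rw [pent, ← sub_eq_of_eq_add' (Acoef_add_Bcoef h).symm]
  module

lemma vertex_sub_pent (h : det2 (v (j-1) - v (j+1)) (v j - v (j+2)) ≠ 0) :
    v j - pent v j = Bcoef v j • (v j - v (j+2)) := by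
  rw [pent, ← sub_eq_of_eq_add (Acoef_add_Bcoef h).symm]
  module

lemma pent_sub_vertex_add_one (h : det2 (v (j-1) - v (j+1)) (v j - v (j+2)) ≠ 0) :
    pent v j - v (j+1) = Ccoef v j • (v (j-1) - v (j+1)) := by
  rw [pent_eq_Ccoef_smul_add_Dcoef_smul h, ← sub_eq_of_eq_add (Ccoef_add_Dcoef h).symm]
  module

lemma vertex_sub_one_sub_pent (h : det2 (v (j-1) - v (j+1)) (v j - v (j+2)) ≠ 0) :
    v (j-1) - pent v j = Dcoef v j • (v (j-1) - v (j+1)) := by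
  rw [pent_eq_Ccoef_smul_add_Dcoef_smul h, ← sub_eq_of_eq_add' (Ccoef_add_Dcoef h).symm]
  module

end

theorem stmt5_general (v : ℤ → ℝ × ℝ) (i : ℤ)
    (hden : ∀ j, det2 (v (j-1) - v (j+1)) (v j - v (j+2)) ≠ 0)
    (hdenU : det2 (pent v (i-1) - pent v i) (pent v i - pent v (i+2)) ≠ 0) :
    det2 (pent v (i-1) - pent v i) (pent v i - pent v (i+1)) /
      det2 (pent v (i-1) - pent v i) (pent v i - pent v (i+2))
    = Bcoef v (i+1) / Dcoef v (i+2) := by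
  set a := v (i-1) - v (i+1)
  set b := v (i+1) - v (i+3)
  have hu_prev : pent v (i-1) - v (i+1) = Acoef v (i-1) • a := by
    simpa only [sub_add_cancel, show i - 1 + 2 = i + 1 by ring] using
      pent_sub_vertex_add_two (hden (i-1))
  have hu : pent v i - v (i+1) = Ccoef v i • a := pent_sub_vertex_add_one (hden i)
  have hu_next : v (i+1) - pent v (i+1) = Bcoef v (i+1) • b := by
    simpa only [show i + 1 + 2 = i + 3 by ring] using vertex_sub_pent (hden (i+1))
  have hu_next₂ : v (i+1) - pent v (i+2) = Dcoef v (i+2) • b := by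
    simpa only [show i + 2 - 1 = i + 1 by ring, show i + 2 + 1 = i + 3 by ring] using
      vertex_sub_one_sub_pent (hden (i+2))
  have h₁ : pent v (i-1) - pent v i = (Acoef v (i-1) - Ccoef v i) • a := by
    rw [sub_smul, ← hu_prev, ← hu, sub_sub_sub_cancel_right]
  have h₂ : pent v i - pent v (i+1) = Ccoef v i • a + Bcoef v (i+1) • b := by
    rw [← hu, ← hu_next, sub_add_sub_cancel]
  have h₃ : pent v i - pent v (i+2) = Ccoef v i • a + Dcoef v (i+2) • b := by
    rw [← hu, ← hu_next₂, sub_add_sub_cancel]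
  rw [h₁, h₃, det2_smul_smul_add_smul] at hdenU ⊢
  rw [h₂, det2_smul_smul_add_smul]
  exact mul_div_mul_left _ _ (left_ne_zero_of_mul hdenU)

theorem stmt5 (v : ℤ → ℝ × ℝ) (i : ℤ)
    (hden : ∀ j, det2 (v (j-1) - v (j+1)) (v j - v (j+2)) ≠ 0)
    (hu : ∀ j, pent v j = Ccoef v j • v (j-1) + Dcoef v j • v (j+1))
    (hD : Dcoef v (i+2) ≠ 0)
    (hdenU : det2 (pent v (i-1) - pent v i) (pent v i - pent v (i+2)) ≠ 0) :
    det2 (pent v (i-1) - pent v i) (pent v i - pent v (i+1)) /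
      det2 (pent v (i-1) - pent v i) (pent v i - pent v (i+2))
    = Bcoef v (i+1) / Dcoef v (i+2) :=
  stmt5_general v i hden hdenU
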